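/- arXiv:2507.05592 — 3 statements merged into one kernel-verified Lean document; each statement's English description precedes it below -/
import Mathlib

section
/- Let f = u^α − v^β·y^γ be a binomial in ℤ[u₁,…,u_k, v₁,…,v_{r−k}, y_{r+1}^{±},…,y_n^{±}] with α ∈ ℕ^k, β ∈ ℕ^{r−k}, γ ∈ ℤ^{n−r}, and set d = |α| = α₁ + ⋯ + α_k. Fix a prime p, and let J_p ⊆ 𝔽_p[u,v,y^{±}] be the ideal generated by f together with all Hasse derivatives of f of order < d (with their binomial-coefficient coefficients, reduced mod p), and let I_p be the ideal generated by f together with all Hasse derivative monomials u^{α−ζ} (|ζ| < d, ζ ≤ α) and v^{β−δ} (|δ| < d, δ ≤ β). Then V(I_p) = V(J_p) as subsets of Spec 𝔽_p[u,v,y^{±}]. -/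
noncomputable section

/-- The ring `𝔽_p[u, v, y^{±}]` (`k[u,v,y^{±}]` for a coefficient ring `k`), realized as
the monoid algebra of `ℕ^U × ℕ^V × ℤ^Y`. -/
abbrev BinRingK (k : Type*) [CommRing k] (U V Y : Type*) : Type _ :=
  AddMonoidAlgebra k ((U →₀ ℕ) × (V →₀ ℕ) × (Y →₀ ℤ))

/-- The monomial `u^a · v^b · y^c`. -/
def monoK {k : Type*} [CommRing k] {U V Y : Type*}
    (a : U →₀ ℕ) (b : V →₀ ℕ) (c : Y →₀ ℤ) : BinRingK k U V Y :=
  AddMonoidAlgebra.single (a, b, c) (1 : k)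

/-- Total degree `|a|` of an exponent vector. -/
def deg {ι : Type*} (a : ι →₀ ℕ) : ℕ := a.sum fun _ n => n

/-!
Fix a prime `𝔭 ⊇ J_p` and `δ ≤ β` with `|δ| < d`. Let `σ` be `β` restricted to the coordinates
where `δ` and `β` agree. Then `σ ≤ δ`, so `|σ| < d`, and every factor of the multinomial coefficient
`∏ C(β_i, σ_i)` is `C(β_i, 0)` or `C(β_i, β_i)`, so the Hasse derivative of order `σ` is the bare
monomial `v^{β-σ}`, which lies in `𝔭`. Now `v^{β-σ}` and `v^{β-δ}` have the same support, so
`v^{β-σ}` divides a power of `v^{β-δ}` and primality gives `v^{β-δ} ∈ 𝔭`; likewise for `u^{α-ζ}`.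
-/

theorem deg_mono {ι : Type*} : Monotone (deg (ι := ι)) := Finsupp.degree_mono

namespace Finsupp

variable {ι : Type*}

theorem filter_le_self {M : Type*} [AddCommMonoid M] [PartialOrder M] [CanonicallyOrderedAdd M]
    (f : ι →₀ M) (P : ι → Prop) [DecidablePred P] : f.filter P ≤ f := fun i => by
  rw [filter_apply]
  split_ifs
  exacts [le_rfl, zero_le]

variable {β δ : ι →₀ ℕ}

theorem prod_choose_filter_eq_one [Fintype ι] (P : ι → Prop) [DecidablePred P] :
    ∏ i, (β i).choose (β.filter P i) = 1 :=
  Finset.prod_eq_one fun i _ => by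
    rw [filter_apply]
    split_ifs <;> simp

theorem filter_eq_apply_le : β.filter (fun i => δ i = β i) ≤ δ := fun i => by
  rw [filter_apply]
  split_ifs with h
  · exact h.ge
  · exact Nat.zero_le _

theorem tsub_filter_eq_apply_le_degree_nsmul (hδ : δ ≤ β) :
    β - β.filter (fun i => δ i = β i) ≤ β.degree • (β - δ) := fun i => by
  have hβi : β i ≤ β.degree := le_degree i β
  have hδi : δ i ≤ β i := hδ i
  simp only [tsub_apply, filter_apply, smul_apply, smul_eq_mul]
  split_ifs with h
  · simp [h]
  · rw [tsub_zero]
    exact hβi.trans (Nat.le_mul_of_pos_right _ (by omega))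

end Finsupp

namespace AddMonoidAlgebra

variable {k G : Type*} [CommSemiring k] [AddCommMonoid G]
  (𝔭 : Ideal (AddMonoidAlgebra k G)) [𝔭.IsPrime]

theorem single_one_mem_of_nsmul_eq_add {a b c : G} {n : ℕ} (hab : n • a = b + c)
    (hb : single b (1 : k) ∈ 𝔭) : single a (1 : k) ∈ 𝔭 := by
  refine Ideal.IsPrime.mem_of_pow_mem ‹_› n ?_
  rw [single_pow, one_pow, hab, ← one_mul (1 : k), ← single_mul_single]
  exact 𝔭.mul_mem_right _ hb

theorem single_tsub_mem_of_hasse_mem {ι : Type*} [Fintype ι] (φ : (ι →₀ ℕ) →+ G)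
    (β : ι →₀ ℕ) (d : ℕ)
    (hJ : ∀ σ ≤ β, deg σ < d →
      ((∏ i, (β i).choose (σ i) : ℕ) : k) • single (φ (β - σ)) (1 : k) ∈ 𝔭)
    {δ : ι →₀ ℕ} (hδ : δ ≤ β) (hδd : deg δ < d) : single (φ (β - δ)) (1 : k) ∈ 𝔭 := by
  classical
  set σ := β.filter (fun i => δ i = β i)
  have hσ : single (φ (β - σ)) (1 : k) ∈ 𝔭 := by
    have := hJ σ (β.filter_le_self _)
      ((deg_mono Finsupp.filter_eq_apply_le).trans_lt hδd)
    rwa [Finsupp.prod_choose_filter_eq_one, Nat.cast_one, one_smul] at this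
  obtain ⟨c, hc⟩ := le_iff_exists_add.mp (Finsupp.tsub_filter_eq_apply_le_degree_nsmul hδ)
  exact single_one_mem_of_nsmul_eq_add 𝔭 (c := φ c) (by rw [← map_nsmul, hc, map_add]) hσ

end AddMonoidAlgebra

theorem stmt4_general {U V Y : Type*} [Fintype U] [Fintype V]
    (p : ℕ)
    (α : U →₀ ℕ) (β : V →₀ ℕ)
    (d : ℕ)
    (f : BinRingK (ZMod p) U V Y)
    (Jp Ip : Ideal (BinRingK (ZMod p) U V Y))
    (hJ : Jp = Ideal.span ({f} ∪
        {g | ∃ ζ : U →₀ ℕ, ζ ≤ α ∧ deg ζ < d ∧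
          g = ((∏ i : U, (α i).choose (ζ i) : ℕ) : ZMod p) • monoK (α - ζ) 0 0} ∪
        {g | ∃ δ : V →₀ ℕ, δ ≤ β ∧ deg δ < d ∧
          g = ((∏ j : V, (β j).choose (δ j) : ℕ) : ZMod p) • monoK 0 (β - δ) 0}))
    (hI : Ip = Ideal.span ({f} ∪
        {g | ∃ ζ : U →₀ ℕ, ζ ≤ α ∧ deg ζ < d ∧ g = monoK (α - ζ) 0 0} ∪
        {g | ∃ δ : V →₀ ℕ, δ ≤ β ∧ deg δ < d ∧ g = monoK 0 (β - δ) 0})) :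
    ∀ 𝔭 : Ideal (BinRingK (ZMod p) U V Y), 𝔭.IsPrime → (Ip ≤ 𝔭 ↔ Jp ≤ 𝔭) := by
  intro 𝔭 _
  have hJI : Jp ≤ Ip := by
    rw [hJ, hI, Ideal.span_le]
    rintro g ((hf | ⟨ζ, hζ, hζd, rfl⟩) | ⟨δ, hδ, hδd, rfl⟩)
    · exact Ideal.subset_span (Or.inl (Or.inl hf))
    · exact Submodule.smul_of_tower_mem _ _
        (Ideal.subset_span (Or.inl (Or.inr ⟨ζ, hζ, hζd, rfl⟩)))
    · exact Submodule.smul_of_tower_mem _ _ (Ideal.subset_span (Or.inr ⟨δ, hδ, hδd, rfl⟩))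
  refine ⟨hJI.trans, fun hJ𝔭 => ?_⟩
  rw [hJ, Ideal.span_le] at hJ𝔭
  rw [hI, Ideal.span_le]
  rintro g ((hf | ⟨ζ, hζ, hζd, rfl⟩) | ⟨δ, hδ, hδd, rfl⟩)
  · exact hJ𝔭 (Or.inl (Or.inl hf))
  · exact AddMonoidAlgebra.single_tsub_mem_of_hasse_mem 𝔭 (AddMonoidHom.inl _ _) α d
      (fun σ hσ hσd => hJ𝔭 (Or.inl (Or.inr ⟨σ, hσ, hσd, rfl⟩))) hζ hζd
  · exact AddMonoidAlgebra.single_tsub_mem_of_hasse_mem 𝔭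
      ((AddMonoidHom.inr _ _).comp (AddMonoidHom.inl _ _)) β d
      (fun σ hσ hσd => hJ𝔭 (Or.inr ⟨σ, hσ, hσd, rfl⟩)) hδ hδd

/-- Let `f = u^α − v^β y^γ` with `d = |α|`, and fix a prime `p`.
Let `J_p ⊆ 𝔽_p[u,v,y^{±}]` be the ideal generated by `f` and all Hasse derivatives of `f`
of order `< d` (with their multinomial-coefficient coefficients reduced mod `p`), and let
`I_p` be the ideal generated by `f` and all Hasse derivative *monomials* `u^{α−ζ}`
(`ζ ≤ α`, `|ζ| < d`) and `v^{β−δ}` (`δ ≤ β`, `|δ| < d`). Then `V(I_p) = V(J_p)` in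
`Spec 𝔽_p[u,v,y^{±}]`, i.e. a prime contains `I_p` iff it contains `J_p`. -/
theorem stmt4 {U V Y : Type*} [Fintype U] [Fintype V]
    (p : ℕ) (hp : p.Prime)
    (α : U →₀ ℕ) (β : V →₀ ℕ) (γ : Y →₀ ℤ)
    (d : ℕ) (hd : d = deg α)
    (f : BinRingK (ZMod p) U V Y) (hf : f = monoK α 0 0 - monoK 0 β γ)
    (Jp Ip : Ideal (BinRingK (ZMod p) U V Y))
    (hJ : Jp = Ideal.span ({f} ∪
        {g | ∃ ζ : U →₀ ℕ, ζ ≤ α ∧ deg ζ < d ∧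
          g = ((∏ i : U, (α i).choose (ζ i) : ℕ) : ZMod p) • monoK (α - ζ) 0 0} ∪
        {g | ∃ δ : V →₀ ℕ, δ ≤ β ∧ deg δ < d ∧
          g = ((∏ j : V, (β j).choose (δ j) : ℕ) : ZMod p) • monoK 0 (β - δ) 0}))
    (hI : Ip = Ideal.span ({f} ∪
        {g | ∃ ζ : U →₀ ℕ, ζ ≤ α ∧ deg ζ < d ∧ g = monoK (α - ζ) 0 0} ∪
        {g | ∃ δ : V →₀ ℕ, δ ≤ β ∧ deg δ < d ∧ g = monoK 0 (β - δ) 0})) :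
    ∀ 𝔭 : Ideal (BinRingK (ZMod p) U V Y), 𝔭.IsPrime → (Ip ≤ 𝔭 ↔ Jp ≤ 𝔭) :=
  stmt4_general p α β d f Jp Ip hJ hI

end
end

section
/- With notation as in the strict transform computation (f = x^α − x^β y^γ, d = |α| ≤ |β|, centre given by V_Δ with α_Δ = d and β_Δ ≥ d, strict transform binomial w^{α''} − w^{β''} y^γ in the chart of i ∈ V_Δ): if in addition Δ is minimal, i.e., for all i ∈ V_{Δ_β} one has (Σ_{j ∈ V_{Δ_β} \ {i}} β_j) − α_Δ < 0, then the pair (|α''|, |β''|) is strictly smaller than (|α|, |β|) in the lexicographic order on ℕ². -/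
noncomputable section

/-- The effect on exponents of the blow-up substitution in the chart of `i`:
`x_j ↦ w_i w_j` for `j ∈ Δ \ {i}`, `x_j ↦ w_j` otherwise. -/
def blowupExp {ι : Type*} [DecidableEq ι] (Δ : Finset ι) (i : ι) (a : ι →₀ ℕ) :
    ι →₀ ℕ :=
  a + Finsupp.single i (∑ j ∈ Δ.erase i, a j)

/-- With notation as in the strict transform computation
(`f = x^α − x^β y^γ`, `d = |α| ≤ |β|`, centre `V_Δ` with `α_Δ = d` and `β_Δ ≥ d`,
strict transform exponents `α''` and `β''` in the chart of `i ∈ V_Δ`): if moreover `Δ`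
is minimal, i.e. for all `i ∈ V_{Δ_β}` one has `(∑_{j ∈ V_{Δ_β} \ {i}} β_j) − α_Δ < 0`,
then `(|α''|, |β''|)` is strictly smaller than `(|α|, |β|)` in the lexicographic order
on `ℕ²`. -/
theorem stmt13 {ι : Type*} [DecidableEq ι] [Fintype ι]
    (α β : ι →₀ ℕ)
    (hdisj : Disjoint α.support β.support)
    (d : ℕ) (hd : d = deg α) (hdβ : d ≤ deg β)
    (Δ : Finset ι)
    (hΔsupp : α.support ⊆ Δ)  -- `α_Δ = d`
    (hβΔ : d ≤ ∑ j ∈ Δ, β j)  -- `β_Δ ≥ d`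
    (hvert : ∀ j ∈ Δ, 0 < α j ∨ 0 < β j)  -- `V_Δ = V_{Δ_α} ∪ V_{Δ_β}`
    (hmin : ∀ i ∈ Δ.filter (fun j => 0 < β j),
      ∑ j ∈ (Δ.filter (fun j => 0 < β j)).erase i, β j < ∑ j ∈ Δ, α j)
    (i : ι) (hi : i ∈ Δ) :
    let α'' := (blowupExp Δ i α).erase i
    let β'' := Finsupp.update (blowupExp Δ i β) i ((∑ j ∈ Δ, β j) - ∑ j ∈ Δ, α j)
    deg α'' < deg α ∨ (deg α'' = deg α ∧ deg β'' < deg β) := by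
  intro α'' β''
  classical
  have degsum : ∀ b : ι →₀ ℕ, deg b = ∑ x, b x := fun b =>
    Finsupp.sum_fintype _ _ fun _ => rfl
  -- α_Δ = deg α
  have hΔα : ∑ j ∈ Δ, α j = deg α := by
    rw [degsum]
    exact Finset.sum_subset (Finset.subset_univ Δ) fun x _ hx =>
      Finsupp.notMem_support_iff.mp fun h => hx (hΔsupp h)
  have hsplitα : deg α = α i + ∑ x ∈ Finset.univ.erase i, α x := by
    rw [degsum]; exact (Finset.add_sum_erase _ _ (Finset.mem_univ i)).symm
  have hsplitβ : deg β = β i + ∑ x ∈ Finset.univ.erase i, β x := by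
    rw [degsum]; exact (Finset.add_sum_erase _ _ (Finset.mem_univ i)).symm
  have hα'' : deg α'' = ∑ x ∈ Finset.univ.erase i, α x := by
    rw [degsum]
    rw [← Finset.add_sum_erase _ _ (Finset.mem_univ i)]
    have h0 : α'' i = 0 := Finsupp.erase_same
    rw [h0, zero_add]
    refine Finset.sum_congr rfl fun x hx => ?_
    have hxi : x ≠ i := (Finset.mem_erase.mp hx).1
    show (Finsupp.erase i (blowupExp Δ i α)) x = α x
    rw [Finsupp.erase_ne hxi]
    simp [blowupExp, Finsupp.single_apply, hxi.symm]
  have hβ'' : deg β'' = ((∑ j ∈ Δ, β j) - ∑ j ∈ Δ, α j)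
      + ∑ x ∈ Finset.univ.erase i, β x := by
    rw [degsum]
    rw [← Finset.add_sum_erase _ _ (Finset.mem_univ i)]
    congr 1
    · show (Finsupp.update (blowupExp Δ i β) i ((∑ j ∈ Δ, β j) - ∑ j ∈ Δ, α j)) i = _
      simp [Finsupp.coe_update]
    · refine Finset.sum_congr rfl fun x hx => ?_
      have hxi : x ≠ i := (Finset.mem_erase.mp hx).1
      show (Finsupp.update (blowupExp Δ i β) i _) x = β x
      rw [show (Finsupp.update (blowupExp Δ i β) i ((∑ j ∈ Δ, β j) - ∑ j ∈ Δ, α j)) x = blowupExp Δ i β x by simp [Finsupp.coe_update, Function.update_of_ne hxi]]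
      simp [blowupExp, Finsupp.single_apply, hxi.symm]
  rcases Nat.eq_zero_or_pos (α i) with hαi | hαi
  · -- α i = 0, so β i > 0
    have hβi : 0 < β i := (hvert i hi).resolve_left (by omega)
    have hifilt : i ∈ Δ.filter fun j => 0 < β j := Finset.mem_filter.mpr ⟨hi, hβi⟩
    have hfilt : ∑ j ∈ Δ.filter (fun j => 0 < β j), β j = ∑ j ∈ Δ, β j :=
      Finset.sum_filter_of_ne fun x _ h => Nat.pos_of_ne_zero h
    have hsplitf : ∑ j ∈ Δ.filter (fun j => 0 < β j), β j
        = β i + ∑ j ∈ (Δ.filter (fun j => 0 < β j)).erase i, β j :=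
      (Finset.add_sum_erase _ _ hifilt).symm
    have hm := hmin i hifilt
    right
    constructor
    · omega
    · omega
  · left
    omega

end
end

section
/- Let R = ℤ[x₁,…,x_r, y₁^{±},…,y_{n−r}^{±}] and let I ⊆ R be an ideal such that R/I is ℤ-flat. Suppose the extended ideal ℚI in ℚ[x, y^{±}] is generated by a subset S ⊆ {x₁,…,x_r} of the variables. Then I contains S; and if moreover for every prime p the ideal I·𝔽_p[x, y^{±}] is also generated by a set of variables of the same cardinality as S, then I = (S), the ideal generated by S. -/
noncomputable section

/-- The ring `k[x₁,…,x_r, y₁^{±},…,y_{n−r}^{±}]`, realized as the monoid algebra of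
`ℕ^X × ℤ^Y` over `k`. -/
abbrev LaurRing (k : Type*) [CommRing k] (X Y : Type*) : Type _ :=
  AddMonoidAlgebra k ((X →₀ ℕ) × (Y →₀ ℤ))

/-- The variable `x_i`. -/
def xvarK (k : Type*) [CommRing k] {X Y : Type*} (i : X) : LaurRing k X Y :=
  AddMonoidAlgebra.single (Finsupp.single i 1, (0 : Y →₀ ℤ)) (1 : k)

/-- The base-change ring map `ℤ[x, y^{±}] → k[x, y^{±}]` (e.g. `k = ℚ` or `k = 𝔽_p`). -/
def baseChange (k : Type*) [CommRing k] (X Y : Type*) :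
    LaurRing ℤ X Y →ₐ[ℤ] LaurRing k X Y :=
  AddMonoidAlgebra.lift ℤ (LaurRing k X Y) ((X →₀ ℕ) × (Y →₀ ℤ))
    (AddMonoidAlgebra.of k ((X →₀ ℕ) × (Y →₀ ℤ)))

/-!
Over any coefficient ring, membership in the ideal generated by some of the variables `xᵢ` is a
condition on the support alone, and base change from `ℤ` to `ℚ` preserves supports; hence
`ℚ(S) ∩ R = (S)`, which gives `I ⊆ ℚI ∩ R = (S)`. Conversely, every element of `ℚI` has a
nonzero integer multiple coming from `I`, so `ℤ`-torsion-freeness of `R/I` gives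
`ℚI ∩ R = I`, and in particular `xᵢ ∈ I` for `i ∈ S`.
-/

open AddMonoidAlgebra

theorem AddMonoidAlgebra.exists_mapRingHom_intCast_eq_zsmul {M : Type*} [AddMonoid M]
    (r : AddMonoidAlgebra ℚ M) :
    ∃ n : ℤ, n ≠ 0 ∧ ∃ r', mapRingHom M (Int.castRingHom ℚ) r' = n • r := by
  induction r using AddMonoidAlgebra.induction_linear with
  | zero => exact ⟨1, one_ne_zero, 0, by simp⟩
  | add p q hp hq =>
    obtain ⟨m, hm, p', hp'⟩ := hp
    obtain ⟨n, hn, q', hq'⟩ := hq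
    refine ⟨m * n, mul_ne_zero hm hn, n • p' + m • q', ?_⟩
    rw [map_add, map_zsmul, map_zsmul, hp', hq', smul_add, smul_smul, smul_smul, mul_comm n m]
  | single a b =>
    refine ⟨b.den, Int.natCast_ne_zero.2 b.den_nz, single a b.num, ?_⟩
    rw [mapRingHom_single, smul_single, zsmul_eq_mul, Int.cast_natCast, Rat.den_mul_eq_num]
    rfl

theorem Ideal.exists_mem_eq_zsmul_of_mem_map {A B : Type*} [CommRing A] [CommRing B]
    (f : A →+* B) (hf : ∀ b, ∃ n : ℤ, n ≠ 0 ∧ ∃ a, f a = n • b) (I : Ideal A) {g : B}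
    (hg : g ∈ I.map f) : ∃ n : ℤ, n ≠ 0 ∧ ∃ a ∈ I, f a = n • g := by
  induction hg using Submodule.span_induction with
  | mem g hg =>
    obtain ⟨a, ha, rfl⟩ := hg
    exact ⟨1, one_ne_zero, a, ha, by simp⟩
  | zero => exact ⟨1, one_ne_zero, 0, I.zero_mem, by simp⟩
  | add g h _ _ ihg ihh =>
    obtain ⟨m, hm, a, haI, ha⟩ := ihg
    obtain ⟨n, hn, b, hbI, hb⟩ := ihh
    refine ⟨m * n, mul_ne_zero hm hn, n • a + m • b,
      I.add_mem (Submodule.smul_of_tower_mem I n haI) (Submodule.smul_of_tower_mem I m hbI), ?_⟩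
    rw [map_add, map_zsmul, map_zsmul, ha, hb, smul_add, smul_smul, smul_smul, mul_comm n m]
  | smul r g _ ihg =>
    obtain ⟨n, hn, a, haI, ha⟩ := ihg
    obtain ⟨m, hm, r', hr'⟩ := hf r
    refine ⟨m * n, mul_ne_zero hm hn, r' * a, I.mul_mem_left r' haI, ?_⟩
    rw [map_mul, ha, hr', smul_eq_mul, smul_mul_smul_comm, mul_smul]

section LaurRing

variable {X Y : Type*}

theorem baseChange_toRingHom (k : Type*) [CommRing k] :
    (baseChange k X Y).toRingHom = mapRingHom _ (Int.castRingHom k) := by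
  ext <;> simp [baseChange]

theorem baseChange_apply (k : Type*) [CommRing k] (f : LaurRing ℤ X Y) :
    baseChange k X Y f = mapRingHom _ (Int.castRingHom k) f :=
  RingHom.congr_fun (baseChange_toRingHom k) f

theorem coeff_baseChange (k : Type*) [CommRing k] (f : LaurRing ℤ X Y)
    (m : (X →₀ ℕ) × (Y →₀ ℤ)) :
    (baseChange k X Y f).coeff m = f.coeff m := by
  rw [baseChange_apply, coeff_mapRingHom, eq_intCast]

theorem baseChange_injective (k : Type*) [CommRing k] [CharZero k] :
    Function.Injective (baseChange k X Y) := fun f g h => by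
  ext m
  have := congrArg (fun φ => φ.coeff m) h
  rwa [coeff_baseChange, coeff_baseChange, Int.cast_inj] at this

theorem support_baseChange (k : Type*) [CommRing k] [CharZero k] (f : LaurRing ℤ X Y) :
    (baseChange k X Y f).coeff.support = f.coeff.support := by
  ext m
  simp [coeff_baseChange]

theorem baseChange_xvarK (k : Type*) [CommRing k] (i : X) :
    baseChange k X Y (xvarK ℤ i) = xvarK k i := by
  simp [xvarK, baseChange]

theorem exists_baseChange_eq_zsmul (r : LaurRing ℚ X Y) :
    ∃ n : ℤ, n ≠ 0 ∧ ∃ r', baseChange ℚ X Y r' = n • r := by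
  simpa only [baseChange_apply] using exists_mapRingHom_intCast_eq_zsmul r

theorem mem_span_xvarK_iff (k : Type*) [CommRing k] (S : Set X) (f : LaurRing k X Y) :
    f ∈ Ideal.span ((fun i => xvarK k i) '' S) ↔
      ∀ m ∈ f.coeff.support, ∃ i ∈ S, ∃ d, m = d + (Finsupp.single i 1, 0) := by
  have : (fun i => xvarK k i) '' S =
      of' k _ '' ((fun i => (Finsupp.single i 1, (0 : Y →₀ ℤ))) '' S) := by
    rw [Set.image_image]
    rfl
  rw [this, mem_ideal_span_of'_image]
  simp only [Set.exists_mem_image]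

theorem mem_of_baseChange_mem_map (I : Ideal (LaurRing ℤ X Y))
    (hflat : ∀ (m : ℤ) (x : LaurRing ℤ X Y ⧸ I), m ≠ 0 → m • x = 0 → x = 0)
    {f : LaurRing ℤ X Y} (hf : baseChange ℚ X Y f ∈ I.map (baseChange ℚ X Y).toRingHom) :
    f ∈ I := by
  obtain ⟨n, hn, a, haI, ha⟩ :=
    Ideal.exists_mem_eq_zsmul_of_mem_map _ exists_baseChange_eq_zsmul I hf
  obtain rfl : a = n • f := baseChange_injective ℚ (by rwa [map_zsmul])
  rw [← Ideal.Quotient.eq_zero_iff_mem] at haI ⊢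
  exact hflat n _ hn (by rwa [map_zsmul] at haI)

theorem comap_baseChange_span_xvarK (k : Type*) [CommRing k] [CharZero k] (S : Set X) :
    Ideal.comap (baseChange k X Y).toRingHom (Ideal.span ((fun i => xvarK k i) '' S)) =
      Ideal.span ((fun i => xvarK ℤ i) '' S) := by
  ext f
  rw [Ideal.mem_comap, mem_span_xvarK_iff, mem_span_xvarK_iff]
  exact forall_congr' fun m => by rw [AlgHom.toRingHom_eq_coe, RingHom.coe_coe, support_baseChange]

end LaurRing

theorem stmt17_general {X Y : Type*}
    (I : Ideal (LaurRing ℤ X Y))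
    (hflat : ∀ (m : ℤ) (x : LaurRing ℤ X Y ⧸ I), m ≠ 0 → m • x = 0 → x = 0)
    (S : Finset X)
    (hQ : Ideal.map (baseChange ℚ X Y).toRingHom I =
      Ideal.span ((fun i => xvarK ℚ i) '' ↑S)) :
    (∀ i ∈ S, xvarK ℤ i ∈ I) ∧
      ((∀ p : ℕ, p.Prime → ∃ T : Finset X, T.card = S.card ∧
          Ideal.map (baseChange (ZMod p) X Y).toRingHom I =
            Ideal.span ((fun i => xvarK (ZMod p) i) '' ↑T)) →
        I = Ideal.span ((fun i => xvarK ℤ i) '' ↑S)) := by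
  have hS : ∀ i ∈ S, xvarK ℤ i ∈ I := fun i hi =>
    mem_of_baseChange_mem_map I hflat <| by
      rw [baseChange_xvarK, hQ]
      exact Ideal.subset_span ⟨i, hi, rfl⟩
  refine ⟨hS, fun _ => le_antisymm ?_ (Ideal.span_le.2 ?_)⟩
  · calc I ≤ (I.map (baseChange ℚ X Y).toRingHom).comap (baseChange ℚ X Y).toRingHom :=
          Ideal.le_comap_map
      _ = Ideal.span ((fun i => xvarK ℤ i) '' ↑S) := by
          rw [hQ, comap_baseChange_span_xvarK]
  · rintro _ ⟨i, hi, rfl⟩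
    exact hS i hi

/-- Let `R = ℤ[x₁,…,x_r, y₁^{±},…,y_{n−r}^{±}]` and `I ⊆ R` an ideal
with `R/I` flat (= torsion-free) over `ℤ`. If the extension `ℚI` of `I` to
`ℚ[x, y^{±}]` is generated by a subset `S` of the `x`-variables, then `I` contains the
variables in `S`; and if moreover for every prime `p` the ideal `I·𝔽_p[x, y^{±}]` is
also generated by a set of `x`-variables of the same cardinality as `S`, then
`I = (S)`. -/
theorem stmt17 {X Y : Type*} [Fintype X]
    (I : Ideal (LaurRing ℤ X Y))
    (hflat : ∀ (m : ℤ) (x : LaurRing ℤ X Y ⧸ I), m ≠ 0 → m • x = 0 → x = 0)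
    (S : Finset X)
    (hQ : Ideal.map (baseChange ℚ X Y).toRingHom I =
      Ideal.span ((fun i => xvarK ℚ i) '' ↑S)) :
    (∀ i ∈ S, xvarK ℤ i ∈ I) ∧
      ((∀ p : ℕ, p.Prime → ∃ T : Finset X, T.card = S.card ∧
          Ideal.map (baseChange (ZMod p) X Y).toRingHom I =
            Ideal.span ((fun i => xvarK (ZMod p) i) '' ↑T)) →
        I = Ideal.span ((fun i => xvarK ℤ i) '' ↑S)) :=
  stmt17_general I hflat S hQ

end
end
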